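/- Let G be a second-countable profinite group, μ the normalized Haar probability measure on G, T : G → G a quotient-preserving map, and let F ⊆ F(T) be a collection of open normal subgroups of G forming a base of neighborhoods of the identity, each element of which T factors through. Then T is measure-preserving and ergodic with respect to μ if and only if for every N ∈ F the induced map T_N : G/N → G/N is minimal, i.e. for all x, y ∈ G there exists k ≥ 0 such that π_N(T^k(x)) = π_N(y). -/

import Mathlib

/-!
A map `T` factoring through an open subgroup `N` induces a map `T_N` of the finite set `G ⧸ N`,
and the cosets of `N` all have Haar measure `μ N`. If `T` preserves `μ`, no coset can have empty
preimage, so `T_N` is a permutation; the preimage in `G` of a `T_N`-orbit is then an invariant open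
set, so by ergodicity it is everything. Conversely, if every `T_N` has a single orbit, it is a
permutation, so `μ` and its image under `T` agree on cosets; and for an invariant `S` the measure
of `S ∩ xN` is constant along the orbit, hence equal to `μ S * μ N`, so the restriction of `μ` to
`S` agrees with `μ S • μ` on cosets. The cosets of the open subgroups through which `T` factors
form a basis of the topology and a π-system, so by second countability they generate the Borel
σ-algebra; hence both equalities hold as measures, and `μ S = μ S ^ 2`.
-/

open MeasureTheory

/-- `T` factors through the quotient map `G → G/N`. -/
def MapFactorsThrough {G : Type*} [Group G] (T : G → G) (N : Subgroup G) : Prop :=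
  ∀ x y : G, x⁻¹ * y ∈ N → (T x)⁻¹ * T y ∈ N

/-- `T` is a quotient-preserving map: the open normal subgroups through whose quotient
maps `T` factors contain a base of neighborhoods of the identity. -/
def QuotientPreserving {G : Type*} [Group G] [TopologicalSpace G] (T : G → G) : Prop :=
  ∀ U ∈ nhds (1 : G), ∃ N : Subgroup G,
    N.Normal ∧ IsOpen (N : Set G) ∧ (N : Set G) ⊆ U ∧ MapFactorsThrough T N

open Set Function Pointwise Topology

section Dynamics

variable {α : Type*} {f : α → α}

lemma surjective_of_forall_exists_iterate_eq (hf : ∀ a b : α, ∃ k, f^[k] a = b) :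
    Surjective f := fun b =>
  let ⟨k, hk⟩ := hf (f b) b
  ⟨f^[k] b, by rw [← iterate_succ_apply' f, iterate_succ_apply, hk]⟩

lemma eq_of_forall_exists_iterate_eq {β : Type*} {φ : α → β} (hφ : ∀ a, φ (f a) = φ a)
    (hf : ∀ a b : α, ∃ k, f^[k] a = b) (a b : α) : φ a = φ b := by
  obtain ⟨k, rfl⟩ := hf a b
  induction k with
  | zero => rfl
  | succ k ih => rw [iterate_succ_apply', hφ, ih]

lemma preimage_range_iterate_of_injective [Finite α] (hf : Injective f) (x : α) :
    f ⁻¹' range (f^[·] x) = range (f^[·] x) := by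
  refine Subset.antisymm ?_ ?_
  · rintro a ⟨k, hk⟩
    have hp := minimalPeriod_pos_of_mem_periodicPts (hf.mem_periodicPts x)
    refine ⟨k + minimalPeriod f x - 1, hf ?_⟩
    rw [← iterate_succ_apply' f, Nat.succ_eq_add_one, Nat.sub_add_cancel (by omega),
      iterate_add_minimalPeriod_eq]
    exact hk
  · rintro _ ⟨k, rfl⟩
    exact ⟨k + 1, iterate_succ_apply' f k x⟩

end Dynamics

section Quotient

variable {G : Type*} [Group G] {T : G → G} {N : Subgroup G}

namespace MapFactorsThrough

def quotientMap (h : MapFactorsThrough T N) : G ⧸ N → G ⧸ N :=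
  Quotient.map' T fun a b hab =>
    QuotientGroup.leftRel_apply.mpr (h a b (QuotientGroup.leftRel_apply.mp hab))

lemma quotientMap_mk (h : MapFactorsThrough T N) (x : G) :
    h.quotientMap x = (T x : G ⧸ N) := rfl

lemma iterate_quotientMap_mk (h : MapFactorsThrough T N) (k : ℕ) (x : G) :
    h.quotientMap^[k] x = (T^[k] x : G ⧸ N) := by
  induction k with
  | zero => rfl
  | succ k ih => rw [iterate_succ_apply', ih, quotientMap_mk, iterate_succ_apply']

lemma preimage_preimage_mk (h : MapFactorsThrough T N) (B : Set (G ⧸ N)) :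
    T ⁻¹' (QuotientGroup.mk ⁻¹' B) = QuotientGroup.mk ⁻¹' (h.quotientMap ⁻¹' B) := rfl

lemma forall_exists_iterate_quotientMap_eq_iff (h : MapFactorsThrough T N) :
    (∀ a b : G ⧸ N, ∃ k, h.quotientMap^[k] a = b) ↔ ∀ x y : G, ∃ k, (T^[k] x)⁻¹ * y ∈ N := by
  simp only [QuotientGroup.forall_mk, iterate_quotientMap_mk, QuotientGroup.eq]

lemma inf {M : Subgroup G} (hN : MapFactorsThrough T N) (hM : MapFactorsThrough T M) :
    MapFactorsThrough T (N ⊓ M) := fun x y hxy => ⟨hN x y hxy.1, hM x y hxy.2⟩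

end MapFactorsThrough

lemma QuotientGroup.preimage_mk_singleton_mk (x : G) :
    QuotientGroup.mk ⁻¹' {(x : G ⧸ N)} = x • (N : Set G) :=
  QuotientGroup.eq_class_eq_leftCoset N x

def leftCosets (𝒩 : Set (Subgroup G)) : Set (Set G) :=
  {S | ∃ N ∈ 𝒩, ∃ x : G, x • (N : Set G) = S}

lemma isPiSystem_leftCosets {𝒩 : Set (Subgroup G)} (hinf : ∀ N ∈ 𝒩, ∀ M ∈ 𝒩, N ⊓ M ∈ 𝒩) :
    IsPiSystem (leftCosets 𝒩) := by
  rintro _ ⟨N, hN, x, rfl⟩ _ ⟨M, hM, y, rfl⟩ ⟨z, hzN, hzM⟩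
  refine ⟨N ⊓ M, hinf N hN M hM, z, ?_⟩
  rw [(leftCoset_eq_iff N).mpr ((mem_leftCoset_iff x).mp hzN),
    (leftCoset_eq_iff M).mpr ((mem_leftCoset_iff y).mp hzM), ← smul_set_inter]
  rfl

/-- The analogue of the paper's `F(T)`, without asking the subgroups to be normal. -/
def openFactorSubgroups [TopologicalSpace G] (T : G → G) : Set (Subgroup G) :=
  {N | IsOpen (N : Set G) ∧ MapFactorsThrough T N}

lemma inf_mem_openFactorSubgroups [TopologicalSpace G] {M : Subgroup G}
    (hN : N ∈ openFactorSubgroups T) (hM : M ∈ openFactorSubgroups T) :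
    N ⊓ M ∈ openFactorSubgroups T :=
  ⟨hN.1.inter hM.1, hN.2.inf hM.2⟩

lemma measure_preimage_mk_singleton [MeasurableSpace G] (μ : Measure G) [μ.IsMulLeftInvariant]
    (q : G ⧸ N) : μ (QuotientGroup.mk ⁻¹' {q}) = μ N := by
  induction q using QuotientGroup.induction_on with
  | H x => rw [QuotientGroup.preimage_mk_singleton_mk, measure_smul]

section Topology

variable [TopologicalSpace G] [IsTopologicalGroup G]

lemma isOpen_preimage_mk (hN : IsOpen (N : Set G)) (B : Set (G ⧸ N)) :
    IsOpen (QuotientGroup.mk ⁻¹' B : Set G) :=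
  haveI := QuotientGroup.discreteTopology hN
  (isOpen_discrete B).preimage QuotientGroup.continuous_mk

lemma isTopologicalBasis_leftCosets {𝒩 : Set (Subgroup G)}
    (hopen : ∀ N ∈ 𝒩, IsOpen (N : Set G)) (hbase : ∀ U ∈ 𝓝 (1 : G), ∃ N ∈ 𝒩, (N : Set G) ⊆ U) :
    TopologicalSpace.IsTopologicalBasis (leftCosets 𝒩) := by
  refine TopologicalSpace.isTopologicalBasis_of_isOpen_of_nhds
    (fun _ ⟨N, hN, x, hx⟩ => hx ▸ (hopen N hN).smul x) fun x U hxU hU => ?_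
  have hU1 : (x * ·) ⁻¹' U ∈ 𝓝 (1 : G) :=
    (hU.preimage (continuous_const_mul x)).mem_nhds (by simpa using hxU)
  obtain ⟨N, hN, hNU⟩ := hbase _ hU1
  refine ⟨x • (N : Set G), ⟨N, hN, x, rfl⟩, ⟨1, N.one_mem, mul_one x⟩, ?_⟩
  rintro _ ⟨n, hn, rfl⟩
  exact hNU hn

lemma continuous_of_forall_nhds_openFactorSubgroups
    (hbase : ∀ U ∈ 𝓝 (1 : G), ∃ N ∈ openFactorSubgroups T, (N : Set G) ⊆ U) : Continuous T := by
  refine continuous_iff_continuousAt.mpr fun x U hU => ?_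
  have hU1 : (T x * ·) ⁻¹' U ∈ 𝓝 (1 : G) :=
    (continuous_const_mul (T x)).continuousAt.preimage_mem_nhds (by simpa using hU)
  obtain ⟨N, ⟨hNo, hNf⟩, hNU⟩ := hbase _ hU1
  refine Filter.mem_map.mpr
    (Filter.mem_of_superset ((hNo.smul x).mem_nhds ⟨1, N.one_mem, mul_one x⟩) ?_)
  rintro y hy
  simpa using hNU (hNf x y ((mem_leftCoset_iff x).mp hy))

lemma MapFactorsThrough.bijective_quotientMap_of_forall_exists_iterate_mem [CompactSpace G]
    (hN : IsOpen (N : Set G)) (hNf : MapFactorsThrough T N)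
    (hmin : ∀ x y : G, ∃ k : ℕ, (T^[k] x)⁻¹ * y ∈ N) : Bijective hNf.quotientMap :=
  have := N.quotient_finite_of_isOpen hN
  Finite.surjective_iff_bijective.mp <| surjective_of_forall_exists_iterate_eq <|
    hNf.forall_exists_iterate_quotientMap_eq_iff.mpr hmin

end Topology

section Measure

variable [TopologicalSpace G] [IsTopologicalGroup G] [MeasurableSpace G] [BorelSpace G]

lemma MeasureTheory.Measure.ext_of_leftCosets [SecondCountableTopology G] {𝒩 : Set (Subgroup G)}
    (hopen : ∀ N ∈ 𝒩, IsOpen (N : Set G)) (hinf : ∀ N ∈ 𝒩, ∀ M ∈ 𝒩, N ⊓ M ∈ 𝒩)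
    (hbase : ∀ U ∈ 𝓝 (1 : G), ∃ N ∈ 𝒩, (N : Set G) ⊆ U) {ν₁ ν₂ : Measure G}
    [IsFiniteMeasure ν₁] (h : ∀ N ∈ 𝒩, ∀ x : G, ν₁ (x • (N : Set G)) = ν₂ (x • (N : Set G)))
    (huniv : ν₁ univ = ν₂ univ) : ν₁ = ν₂ := by
  refine ext_of_generate_finite _ ?_ (isPiSystem_leftCosets hinf)
    (fun _ ⟨N, hN, x, hx⟩ => hx ▸ h N hN x) huniv
  exact BorelSpace.measurable_eq.trans
    (isTopologicalBasis_leftCosets hopen hbase).borel_eq_generateFrom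

lemma MeasureTheory.Measure.ext_of_openFactorSubgroups [SecondCountableTopology G]
    (hbase : ∀ U ∈ 𝓝 (1 : G), ∃ N ∈ openFactorSubgroups T, (N : Set G) ⊆ U)
    {ν₁ ν₂ : Measure G} [IsFiniteMeasure ν₁]
    (h : ∀ N ∈ openFactorSubgroups T, ∀ x : G, ν₁ (x • (N : Set G)) = ν₂ (x • (N : Set G)))
    (huniv : ν₁ univ = ν₂ univ) : ν₁ = ν₂ :=
  Measure.ext_of_leftCosets (fun _ hN => hN.1)
    (fun _ hN _ hM => inf_mem_openFactorSubgroups hN hM) hbase h huniv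

lemma card_mul_measure_preimage_mk_singleton [Fintype (G ⧸ N)] (hN : IsOpen (N : Set G))
    (ν : Measure G) (hconst : ∀ q q' : G ⧸ N,
      ν (QuotientGroup.mk ⁻¹' {q}) = ν (QuotientGroup.mk ⁻¹' {q'})) (q : G ⧸ N) :
    Fintype.card (G ⧸ N) * ν (QuotientGroup.mk ⁻¹' {q}) = ν univ := by
  rw [← preimage_univ (f := QuotientGroup.mk (s := N)), ← Finset.coe_univ,
    ← sum_measure_preimage_singleton _ fun q _ => (isOpen_preimage_mk hN {q}).measurableSet,
    Finset.sum_congr rfl fun q' _ => hconst q' q, Finset.sum_const, nsmul_eq_mul,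
    Finset.card_univ]

lemma MapFactorsThrough.surjective_quotientMap_of_measure_preimage (μ : Measure G)
    [μ.IsOpenPosMeasure] (hN : IsOpen (N : Set G)) (hNf : MapFactorsThrough T N)
    (hmp : ∀ S : Set G, MeasurableSet S → μ (T ⁻¹' S) = μ S) : Surjective hNf.quotientMap := by
  intro b
  by_contra hb
  have hempty : T ⁻¹' (QuotientGroup.mk ⁻¹' {b}) = ∅ := by
    rw [hNf.preimage_preimage_mk, eq_empty_iff_forall_notMem]
    exact fun x hx => hb ⟨x, hx⟩
  have hb0 := hmp _ (isOpen_preimage_mk hN {b}).measurableSet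
  rw [hempty, measure_empty, eq_comm, (isOpen_preimage_mk hN {b}).measure_eq_zero_iff μ] at hb0
  obtain ⟨x, rfl⟩ := QuotientGroup.mk_surjective b
  exact hb0.subset (mem_singleton (x : G ⧸ N))

lemma exists_iterate_mem_of_ergodic [CompactSpace G] (μ : Measure G) [IsProbabilityMeasure μ]
    [μ.IsOpenPosMeasure] (hN : IsOpen (N : Set G)) (hNf : MapFactorsThrough T N)
    (hmp : ∀ S : Set G, MeasurableSet S → μ (T ⁻¹' S) = μ S)
    (herg : ∀ S : Set G, MeasurableSet S → T ⁻¹' S = S → μ S = 0 ∨ μ S = 1) (x y : G) :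
    ∃ k : ℕ, (T^[k] x)⁻¹ * y ∈ N := by
  have := N.quotient_finite_of_isOpen hN
  have hinj : Injective hNf.quotientMap := Finite.injective_iff_surjective.mpr
    (hNf.surjective_quotientMap_of_measure_preimage μ hN hmp)
  set O := range (hNf.quotientMap^[·] (x : G ⧸ N))
  have hOopen : IsOpen (QuotientGroup.mk ⁻¹' O : Set G) := isOpen_preimage_mk hN O
  have hOinv : T ⁻¹' (QuotientGroup.mk ⁻¹' O) = QuotientGroup.mk ⁻¹' O := by
    rw [hNf.preimage_preimage_mk, preimage_range_iterate_of_injective hinj]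
  have hOne : μ (QuotientGroup.mk ⁻¹' O) ≠ 0 := hOopen.measure_ne_zero μ ⟨x, 0, rfl⟩
  have hOc : μ (QuotientGroup.mk ⁻¹' Oᶜ) = 0 := (prob_compl_eq_zero_iff hOopen.measurableSet).mpr
    ((herg _ hOopen.measurableSet hOinv).resolve_left hOne)
  rw [(isOpen_preimage_mk hN Oᶜ).measure_eq_zero_iff μ, eq_empty_iff_forall_notMem] at hOc
  obtain ⟨k, hk⟩ : (y : G ⧸ N) ∈ O := not_not.mp (hOc y)
  exact ⟨k, QuotientGroup.eq.mp ((hNf.iterate_quotientMap_mk k x).symm.trans hk)⟩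

lemma MapFactorsThrough.measure_preimage_mk_singleton_quotientMap (ν : Measure G)
    (hN : IsOpen (N : Set G)) (hNf : MapFactorsThrough T N) (hinj : Injective hNf.quotientMap)
    (hν : ∀ A : Set G, MeasurableSet A → ν (T ⁻¹' A) = ν A) (q : G ⧸ N) :
    ν (QuotientGroup.mk ⁻¹' {hNf.quotientMap q}) = ν (QuotientGroup.mk ⁻¹' {q}) := by
  rw [← hν _ (isOpen_preimage_mk hN _).measurableSet, hNf.preimage_preimage_mk,
    ← image_singleton, hinj.preimage_image]

lemma measure_preimage_mk_singleton_of_forall_exists_iterate_mem [CompactSpace G]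
    (μ : Measure G) [μ.IsMulLeftInvariant] [IsProbabilityMeasure μ] (hN : IsOpen (N : Set G))
    (hNf : MapFactorsThrough T N) (hmin : ∀ x y : G, ∃ k : ℕ, (T^[k] x)⁻¹ * y ∈ N)
    {ν : Measure G} (hν : ∀ A : Set G, MeasurableSet A → ν (T ⁻¹' A) = ν A) (q : G ⧸ N) :
    ν (QuotientGroup.mk ⁻¹' {q}) = ν univ * μ N := by
  have := N.quotient_finite_of_isOpen hN
  have := Fintype.ofFinite (G ⧸ N)
  have hconst : ∀ q q' : G ⧸ N,
      ν (QuotientGroup.mk ⁻¹' {q}) = ν (QuotientGroup.mk ⁻¹' {q'}) :=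
    eq_of_forall_exists_iterate_eq
      (hNf.measure_preimage_mk_singleton_quotientMap ν hN
        (hNf.bijective_quotientMap_of_forall_exists_iterate_mem hN hmin).injective hν)
      (hNf.forall_exists_iterate_quotientMap_eq_iff.mpr hmin)
  have hνq := card_mul_measure_preimage_mk_singleton hN ν hconst q
  have hμq := card_mul_measure_preimage_mk_singleton hN μ
    (fun q q' => by rw [measure_preimage_mk_singleton, measure_preimage_mk_singleton]) q
  rw [measure_preimage_mk_singleton, measure_univ] at hμq
  calc ν (QuotientGroup.mk ⁻¹' {q})
      = ν (QuotientGroup.mk ⁻¹' {q}) * (Fintype.card (G ⧸ N) * μ N) := by rw [hμq, mul_one]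
    _ = Fintype.card (G ⧸ N) * ν (QuotientGroup.mk ⁻¹' {q}) * μ N := by ring
    _ = ν univ * μ N := by rw [hνq]

lemma measure_preimage_eq_of_forall_exists_iterate_mem [CompactSpace G]
    [SecondCountableTopology G] (μ : Measure G) [μ.IsMulLeftInvariant] [IsFiniteMeasure μ]
    (hbase : ∀ U ∈ 𝓝 (1 : G), ∃ N ∈ openFactorSubgroups T, (N : Set G) ⊆ U)
    (hmin : ∀ N ∈ openFactorSubgroups T, ∀ x y : G, ∃ k : ℕ, (T^[k] x)⁻¹ * y ∈ N)
    (S : Set G) (hS : MeasurableSet S) : μ (T ⁻¹' S) = μ S := by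
  have hT : Measurable T := (continuous_of_forall_nhds_openFactorSubgroups hbase).measurable
  suffices hmap : μ.map T = μ by rw [← Measure.map_apply hT hS, hmap]
  refine Measure.ext_of_openFactorSubgroups hbase (fun N ⟨hN, hNf⟩ x => ?_) ?_
  · obtain ⟨hinj, hsurj⟩ := hNf.bijective_quotientMap_of_forall_exists_iterate_mem hN
      (hmin N ⟨hN, hNf⟩)
    obtain ⟨c, hc⟩ := hsurj (x : G ⧸ N)
    rw [Measure.map_apply hT (hN.smul x).measurableSet, measure_smul,
      ← QuotientGroup.preimage_mk_singleton_mk, hNf.preimage_preimage_mk, ← hc, ← image_singleton,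
      hinj.preimage_image, measure_preimage_mk_singleton]
  · rw [Measure.map_apply hT MeasurableSet.univ, preimage_univ]

lemma measure_eq_zero_or_one_of_forall_exists_iterate_mem [CompactSpace G]
    [SecondCountableTopology G] (μ : Measure G) [μ.IsMulLeftInvariant] [IsProbabilityMeasure μ]
    (hbase : ∀ U ∈ 𝓝 (1 : G), ∃ N ∈ openFactorSubgroups T, (N : Set G) ⊆ U)
    (hmin : ∀ N ∈ openFactorSubgroups T, ∀ x y : G, ∃ k : ℕ, (T^[k] x)⁻¹ * y ∈ N)
    (hmp : ∀ A : Set G, MeasurableSet A → μ (T ⁻¹' A) = μ A)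
    (S : Set G) (hS : MeasurableSet S) (hSinv : T ⁻¹' S = S) : μ S = 0 ∨ μ S = 1 := by
  have hνS : ∀ A : Set G, MeasurableSet A → μ.restrict S (T ⁻¹' A) = μ.restrict S A := by
    intro A hA
    rw [Measure.restrict_apply' hS, Measure.restrict_apply' hS]
    conv_lhs => rw [← hSinv, ← preimage_inter, hmp _ (hA.inter hS)]
  have hrestrict : μ.restrict S = μ S • μ := by
    refine Measure.ext_of_openFactorSubgroups hbase (fun N ⟨hN, hNf⟩ x => ?_) ?_
    · rw [← QuotientGroup.preimage_mk_singleton_mk,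
        measure_preimage_mk_singleton_of_forall_exists_iterate_mem μ hN hNf
          (hmin N ⟨hN, hNf⟩) hνS, Measure.restrict_apply_univ, Measure.smul_apply,
        measure_preimage_mk_singleton, smul_eq_mul]
    · rw [Measure.restrict_apply_univ, Measure.smul_apply, measure_univ, smul_eq_mul, mul_one]
  have hSS : μ S * μ S = μ S := by
    simpa [Measure.restrict_apply hS] using (congrArg (· S) hrestrict).symm
  rcases eq_or_ne (μ S) 0 with h0 | h0
  · exact Or.inl h0
  · exact Or.inr ((ENNReal.mul_eq_left h0 (measure_ne_top μ S)).mp hSS)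

end Measure

end Quotient

theorem stmt6_general {G : Type*} [Group G] [TopologicalSpace G] [IsTopologicalGroup G]
    [CompactSpace G] [SecondCountableTopology G]
    [MeasurableSpace G] [BorelSpace G]
    (μ : Measure G) [μ.IsHaarMeasure] [IsProbabilityMeasure μ]
    (T : G → G)
    (𝓕 : Set (Subgroup G))
    (h𝓕 : ∀ N ∈ 𝓕, N.Normal ∧ IsOpen (N : Set G) ∧ MapFactorsThrough T N)
    (hbase : ∀ U ∈ nhds (1 : G), ∃ N ∈ 𝓕, (N : Set G) ⊆ U) :
    ((∀ S : Set G, MeasurableSet S → μ (T ⁻¹' S) = μ S) ∧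
      (∀ S : Set G, MeasurableSet S → T ⁻¹' S = S → μ S = 0 ∨ μ S = 1)) ↔
    (∀ N ∈ 𝓕, ∀ x y : G, ∃ k : ℕ, (T^[k] x)⁻¹ * y ∈ N) := by
  have hbase' : ∀ U ∈ 𝓝 (1 : G), ∃ N ∈ openFactorSubgroups T, (N : Set G) ⊆ U := fun U hU =>
    let ⟨N, hN, hNU⟩ := hbase U hU
    ⟨N, (h𝓕 N hN).2, hNU⟩
  constructor
  · rintro ⟨hmp, herg⟩ N hN
    exact exists_iterate_mem_of_ergodic μ (h𝓕 N hN).2.1 (h𝓕 N hN).2.2 hmp herg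
  · intro hmin
    have hmin' : ∀ N ∈ openFactorSubgroups T, ∀ x y : G, ∃ k : ℕ, (T^[k] x)⁻¹ * y ∈ N := by
      intro N hN x y
      obtain ⟨M, hM, hMN⟩ := hbase N (hN.1.mem_nhds N.one_mem)
      obtain ⟨k, hk⟩ := hmin M hM x y
      exact ⟨k, hMN hk⟩
    have hmp := measure_preimage_eq_of_forall_exists_iterate_mem μ hbase' hmin'
    exact ⟨hmp, measure_eq_zero_or_one_of_forall_exists_iterate_mem μ hbase' hmin' hmp⟩

theorem stmt6 {G : Type*} [Group G] [TopologicalSpace G] [IsTopologicalGroup G]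
    [CompactSpace G] [T2Space G] [TotallyDisconnectedSpace G] [SecondCountableTopology G]
    [MeasurableSpace G] [BorelSpace G]
    (μ : Measure G) [μ.IsHaarMeasure] [IsProbabilityMeasure μ]
    (T : G → G) (hT : QuotientPreserving T)
    (𝓕 : Set (Subgroup G))
    (h𝓕 : ∀ N ∈ 𝓕, N.Normal ∧ IsOpen (N : Set G) ∧ MapFactorsThrough T N)
    (hbase : ∀ U ∈ nhds (1 : G), ∃ N ∈ 𝓕, (N : Set G) ⊆ U) :
    ((∀ S : Set G, MeasurableSet S → μ (T ⁻¹' S) = μ S) ∧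
      (∀ S : Set G, MeasurableSet S → T ⁻¹' S = S → μ S = 0 ∨ μ S = 1)) ↔
    (∀ N ∈ 𝓕, ∀ x y : G, ∃ k : ℕ, (T^[k] x)⁻¹ * y ∈ N) :=
  stmt6_general μ T 𝓕 h𝓕 hbase
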